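/- Let ψ_1 : H_2(G, ⊕_{i=1}^r k[G/G_i]) → H_2(G, k) be the map induced by Φ. Identifying H_2(G,k) = (R ∩ [F,F])/[F,R] ⊗_ℤ k by Hopf's theorem and H_2(G, k[G/G_i]) = H_2(G_i, k) by Shapiro's lemma, with each G_i elementary abelian (so [F_i,F_i] ⊆ R_i), the map induced by the i-th summand, f_i : [F_i,F_i]/[F_i,R_i] → (R ∩ [F,F])/[F,R], has kernel ([F_i,F_i] ∩ [F,R])/[F_i,R_i] and image isomorphic to [F_i,F_i][F,R]/[F,R]; consequently coker ψ_1 = (R ∩ [F,F])/⟨ [F_i,F_i][F,R] ⟩ ⊗_ℤ k, the subgroup generated over those i with |G_i| > p (for G_i cyclic of order p the contribution vanishes). -/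

import Mathlib

/-!
Since `f_i` is induced by the inclusion `[F_i,F_i] ⊆ R ∩ [F,F]`, its kernel is the trace of
`[F,R]` on `[F_i,F_i]`, and its image is `[F_i,F_i]/([F_i,F_i] ∩ [F,R]) ≅ [F_i,F_i][F,R]/[F,R]`
by the second isomorphism theorem.

For the cokernel: `(R ∩ [F,F])/[F,R]` is abelian, so by right exactness of `k ⊗_ℤ -` the
projection onto `(R ∩ [F,F])/S`, `S = ⟨[F_i,F_i][F,R]⟩`, induces a surjection whose kernel is
spanned by the classes of `S`. The range of `ψ₁` is spanned by the classes of the `[F_i,F_i]`,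
and when `G_i` is cyclic these already lie in `[F,R]`: if `F_i/(R ∩ F_i)` is cyclic, then in
`F_i/[F_i, R ∩ F_i]` the image of `R ∩ F_i` is central with cyclic quotient, so this group is
abelian and `[F_i,F_i] ≤ [F_i, R ∩ F_i] ≤ [F,R]`.
-/

/-- The quotient of the subgroup `N` of `F` by (the trace on `N` of) the subgroup `D`. -/
abbrev hopfQuot (F : Type*) [Group F] (N D : Subgroup F) [(D.subgroupOf N).Normal] :=
  ↥N ⧸ D.subgroupOf N

theorem IsPGroup.isCyclic_of_card_le {p : ℕ} [hp : Fact p.Prime] {G : Type*} [Group G]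
    [Finite G] (hG : IsPGroup p G) (hle : Nat.card G ≤ p) : IsCyclic G := by
  obtain ⟨n, hn⟩ := hG.exists_card_eq
  refine isCyclic_of_card_dvd_prime (p := p) (hn ▸ ?_)
  have hn1 : n ≤ 1 := (Nat.pow_le_pow_iff_right hp.out.one_lt).mp (by rwa [pow_one, ← hn])
  simpa using Nat.pow_dvd_pow p hn1

theorem commutator_le_commutator_ker_of_isCyclic {H G' : Type*} [Group H] [Group G']
    [IsCyclic G'] (f : H →* G') : ⁅(⊤ : Subgroup H), ⊤⁆ ≤ ⁅(⊤ : Subgroup H), f.ker⁆ := by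
  let C := ⁅(⊤ : Subgroup H), f.ker⁆
  let f' : H ⧸ C →* G' := QuotientGroup.lift C f (Subgroup.commutator_le_right _ _)
  have hcentral : f'.ker ≤ Subgroup.center (H ⧸ C) := by
    rw [QuotientGroup.ker_lift, Subgroup.map_le_iff_le_comap]
    intro n hn
    rw [Subgroup.mem_comap, Subgroup.mem_center_iff]
    intro q
    induction q using QuotientGroup.induction_on with
    | H h =>
      rw [QuotientGroup.mk'_apply, ← QuotientGroup.mk_mul, ← QuotientGroup.mk_mul, eq_comm,
        QuotientGroup.eq]
      convert Subgroup.commutator_mem_commutator (Subgroup.mem_top h⁻¹) (inv_mem hn) using 1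
      group
  have := f'.isMulCommutative_of_isCyclic_of_ker_le_center hcentral
  change _ ≤ C
  rw [← QuotientGroup.ker_mk' C, ← Subgroup.map_eq_bot_iff, Subgroup.map_commutator, eq_bot_iff,
    ← commutator_eq_bot (H ⧸ C), commutator_def]
  exact Subgroup.commutator_mono le_top le_top

theorem commutator_le_commutator_ker_inf_of_isCyclic {F G : Type*} [Group F] [Group G]
    (pr : F →* G) (K : Subgroup F) [IsCyclic (K.map pr)] : ⁅K, K⁆ ≤ ⁅K, pr.ker ⊓ K⁆ := by
  have hrange : (pr.comp K.subtype).range = K.map pr := by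
    rw [MonoidHom.range_comp, Subgroup.range_subtype]
  have : IsCyclic (pr.comp K.subtype).range := hrange ▸ inferInstance
  have key := Subgroup.map_mono (f := K.subtype)
    (commutator_le_commutator_ker_of_isCyclic (pr.comp K.subtype).rangeRestrict)
  rwa [Subgroup.map_commutator, Subgroup.map_commutator, ← MonoidHom.range_eq_map,
    Subgroup.range_subtype, MonoidHom.ker_rangeRestrict, ← MonoidHom.comap_ker,
    ← Subgroup.subgroupOf, Subgroup.subgroupOf_map_subtype] at key

theorem Subgroup.commutator_top_le_subgroupOf_iff {F : Type*} [Group F] (M D : Subgroup F) :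
    ⁅(⊤ : Subgroup M), ⊤⁆ ≤ D.subgroupOf M ↔ ⁅M, M⁆ ≤ D := by
  rw [Subgroup.subgroupOf, ← Subgroup.map_le_iff_le_comap, Subgroup.map_commutator,
    ← MonoidHom.range_eq_map, Subgroup.range_subtype]

theorem Abelianization.ker_of_comp_mk' {F : Type*} [Group F] {M D : Subgroup F}
    [(D.subgroupOf M).Normal] (h : ⁅M, M⁆ ≤ D) :
    (Abelianization.of.comp (QuotientGroup.mk' (D.subgroupOf M))).ker = D.subgroupOf M := by
  rw [← MonoidHom.comap_ker, Abelianization.ker_of, commutator_def,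
    ← Subgroup.map_top_of_surjective _ (QuotientGroup.mk'_surjective _),
    ← Subgroup.map_commutator, Subgroup.comap_map_eq, QuotientGroup.ker_mk', sup_eq_right]
  exact (Subgroup.commutator_top_le_subgroupOf_iff M D).mpr h

open scoped TensorProduct DirectSum

theorem LinearMap.ker_baseChange_of_surjective {R A M N : Type*} [CommRing R] [CommRing A]
    [Algebra R A] [AddCommGroup M] [Module R M] [AddCommGroup N] [Module R N] {t : M →ₗ[R] N}
    (ht : Function.Surjective t) : ker (t.baseChange A) = (ker t).baseChange A :=
  exact_iff.mp (lTensor_exact A t.exact_subtype_ker_map ht)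

theorem DirectSum.range_le_of_forall_lof_one_tmul_mem {k : Type*} [CommRing k] {ι : Type*}
    [DecidableEq ι] {A : ι → Type*} [∀ i, AddCommGroup (A i)] {W : Type*} [AddCommGroup W]
    [Module k W] (ψ : (⨁ i, k ⊗[ℤ] A i) →ₗ[k] W) (P : Submodule k W)
    (h : ∀ i (a : A i), ψ (DirectSum.lof k ι _ i ((1 : k) ⊗ₜ[ℤ] a)) ∈ P) :
    LinearMap.range ψ ≤ P := by
  rintro _ ⟨u, rfl⟩
  induction u using DirectSum.induction_on with
  | zero => simp
  | add u v hu hv => rw [map_add]; exact P.add_mem hu hv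
  | of i t =>
    induction t using TensorProduct.induction_on with
    | zero => simp
    | add t t' ht ht' => rw [map_add, map_add]; exact P.add_mem ht ht'
    | tmul c a =>
      have : DirectSum.of (fun i => k ⊗[ℤ] A i) i (c ⊗ₜ[ℤ] a) =
          c • DirectSum.lof k ι (fun i => k ⊗[ℤ] A i) i ((1 : k) ⊗ₜ[ℤ] a) := by
        rw [← map_smul, TensorProduct.smul_tmul', smul_eq_mul, mul_one, DirectSum.lof_eq_of]
      rw [this, map_smul]
      exact P.smul_mem c (h i a)

section HopfClass

variable (k : Type*) [CommRing k] {F : Type*} [Group F] (M D : Subgroup F)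
  [(D.subgroupOf M).Normal]

def hopfClass (x : M) : k ⊗[ℤ] Additive (Abelianization (hopfQuot F M D)) :=
  (1 : k) ⊗ₜ[ℤ] Additive.ofMul (Abelianization.of (QuotientGroup.mk x))

variable {k M D}

@[simp]
theorem hopfClass_mul (x y : M) :
    hopfClass k M D (x * y) = hopfClass k M D x + hopfClass k M D y := by
  simp [hopfClass, TensorProduct.tmul_add]

@[simp]
theorem hopfClass_inv (x : M) : hopfClass k M D x⁻¹ = -hopfClass k M D x := by
  simp [hopfClass, TensorProduct.tmul_neg]

theorem hopfClass_eq_zero_of_mem {x : M} (hx : (x : F) ∈ D) : hopfClass k M D x = 0 := by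
  rw [hopfClass, (QuotientGroup.eq_one_iff x).mpr hx]
  simp

variable (k M D) in
def hopfClassPreimage (P : Submodule k (k ⊗[ℤ] Additive (Abelianization (hopfQuot F M D)))) :
    Subgroup F where
  carrier := {z | ∃ hz : z ∈ M, hopfClass k M D ⟨z, hz⟩ ∈ P}
  mul_mem' := fun ⟨ha, ha'⟩ ⟨hb, hb'⟩ =>
    ⟨M.mul_mem ha hb, (hopfClass_mul (k := k) (D := D) ⟨_, ha⟩ ⟨_, hb⟩).symm ▸ P.add_mem ha' hb'⟩
  one_mem' :=
    ⟨M.one_mem, (hopfClass_eq_zero_of_mem (k := k) (M := M) (x := 1) D.one_mem).symm ▸ P.zero_mem⟩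
  inv_mem' := fun ⟨ha, ha'⟩ =>
    ⟨M.inv_mem ha, (hopfClass_inv (k := k) (D := D) ⟨_, ha⟩).symm ▸ P.neg_mem ha'⟩

end HopfClass

namespace hopfQuot

variable {F : Type*} [Group F]

theorem exists_ofMul_of_mk {N E : Subgroup F} [(E.subgroupOf N).Normal]
    (a : Additive (Abelianization (hopfQuot F N E))) :
    ∃ x : N, Additive.ofMul (Abelianization.of (QuotientGroup.mk x)) = a := by
  obtain ⟨q, hq⟩ := QuotientGroup.mk'_surjective _ (Additive.toMul a)
  obtain ⟨x, rfl⟩ := QuotientGroup.mk_surjective q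
  exact ⟨x, hq⟩

section MapOfLE

variable {N E M D : Subgroup F} [(E.subgroupOf N).Normal] [(D.subgroupOf M).Normal]
  {hNM : N ≤ M} {f : hopfQuot F N E →* hopfQuot F M D}

theorem ker_comp_mk'_of_map_mk
    (hf : ∀ x : N, f (QuotientGroup.mk x) = QuotientGroup.mk (Subgroup.inclusion hNM x)) :
    (f.comp (QuotientGroup.mk' (E.subgroupOf N))).ker = D.subgroupOf N := by
  ext x
  rw [MonoidHom.mem_ker, MonoidHom.comp_apply, QuotientGroup.mk'_apply, hf,
    QuotientGroup.eq_one_iff, Subgroup.mem_subgroupOf, Subgroup.mem_subgroupOf,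
    Subgroup.coe_inclusion]

theorem ker_eq_of_map_mk
    (hf : ∀ x : N, f (QuotientGroup.mk x) = QuotientGroup.mk (Subgroup.inclusion hNM x)) :
    f.ker = ((N ⊓ D).subgroupOf N).map (QuotientGroup.mk' (E.subgroupOf N)) := by
  rw [Subgroup.inf_subgroupOf_left, ← ker_comp_mk'_of_map_mk hf, ← MonoidHom.comap_ker,
    Subgroup.map_comap_eq_self_of_surjective (QuotientGroup.mk'_surjective _)]

theorem nonempty_range_mulEquiv_of_map_mk [D.Normal]
    (hf : ∀ x : N, f (QuotientGroup.mk x) = QuotientGroup.mk (Subgroup.inclusion hNM x)) :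
    Nonempty (f.range ≃* hopfQuot F (N ⊔ D) D) := by
  have hrange : (f.comp (QuotientGroup.mk' (E.subgroupOf N))).range = f.range := by
    rw [MonoidHom.range_comp, MonoidHom.range_eq_top.mpr (QuotientGroup.mk'_surjective _),
      MonoidHom.range_eq_map]
  exact ⟨(MulEquiv.subgroupCongr hrange).symm.trans <|
    (QuotientGroup.quotientKerEquivRange _).symm.trans <|
    (QuotientGroup.quotientMulEquivOfEq (ker_comp_mk'_of_map_mk hf)).trans <|
    QuotientGroup.quotientInfEquivProdNormalQuotient N D⟩

end MapOfLE

variable {k : Type*} [CommRing k] {M D : Subgroup F} [(D.subgroupOf M).Normal]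

theorem nonempty_quotient_range_linearEquiv {S : Subgroup F} [(S.subgroupOf M).Normal]
    (hDS : D ≤ S) (hMM : ⁅M, M⁆ ≤ D) {V : Type*} [AddCommMonoid V] [Module k V]
    (ψ : V →ₗ[k] k ⊗[ℤ] Additive (Abelianization (hopfQuot F M D)))
    (hψ : LinearMap.range ψ = Submodule.span k (hopfClass k M D '' S.subgroupOf M)) :
    Nonempty (((k ⊗[ℤ] Additive (Abelianization (hopfQuot F M D))) ⧸ LinearMap.range ψ) ≃ₗ[k]
      k ⊗[ℤ] Additive (Abelianization (hopfQuot F M S))) := by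
  let t := (MonoidHom.toAdditive (Abelianization.map (QuotientGroup.map (D.subgroupOf M)
    (S.subgroupOf M) (MonoidHom.id M) (Subgroup.subgroupOf_mono M hDS)))).toIntLinearMap
  have ht_mk (x : M) :
      t (.ofMul (.of (QuotientGroup.mk x))) = .ofMul (.of (QuotientGroup.mk x)) := rfl
  have ht : Function.Surjective t := fun b => by
    obtain ⟨x, rfl⟩ := exists_ofMul_of_mk b
    exact ⟨_, ht_mk x⟩
  have hker : LinearMap.ker t = (fun x : M => Additive.ofMul (Abelianization.of
      (QuotientGroup.mk x : hopfQuot F M D))) '' S.subgroupOf M := by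
    ext a
    obtain ⟨x, rfl⟩ := exists_ofMul_of_mk a
    have hS (y : M) : t (.ofMul (.of (QuotientGroup.mk y))) = 0 ↔ y ∈ S.subgroupOf M := by
      rw [ht_mk, ofMul_eq_zero]
      exact SetLike.ext_iff.mp (Abelianization.ker_of_comp_mk' (hMM.trans hDS)) y
    refine ⟨fun hx => ⟨x, (hS x).mp hx, rfl⟩, ?_⟩
    rintro ⟨y, hy, hyx⟩
    rw [SetLike.mem_coe, LinearMap.mem_ker, ← hyx]
    exact (hS y).mpr hy
  have hrange : LinearMap.range ψ = LinearMap.ker (t.baseChange k) := by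
    rw [hψ, LinearMap.ker_baseChange_of_surjective ht, Submodule.baseChange_eq_span,
      Submodule.map_coe, hker, Set.image_image]
    rfl
  exact ⟨(Submodule.quotEquivOfEq _ _ hrange).trans
    (LinearMap.quotKerEquivOfSurjective _ (LinearMap.baseChange_surjective k ht))⟩

theorem range_eq_span_hopfClass {ι : Type*} [DecidableEq ι] {N E : ι → Subgroup F}
    [∀ i, ((E i).subgroupOf (N i)).Normal] (hNM : ∀ i, N i ≤ M) (hDM : D ≤ M)
    (big : ι → Prop) (hsmall : ∀ i, ¬ big i → N i ≤ D)
    (ψ : (⨁ i, k ⊗[ℤ] Additive (Abelianization (hopfQuot F (N i) (E i)))) →ₗ[k]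
      k ⊗[ℤ] Additive (Abelianization (hopfQuot F M D)))
    (hψ : ∀ i (x : N i), ψ (DirectSum.lof k ι _ i
      ((1 : k) ⊗ₜ[ℤ] Additive.ofMul (Abelianization.of (QuotientGroup.mk x)))) =
        hopfClass k M D (Subgroup.inclusion (hNM i) x)) :
    LinearMap.range ψ =
      Submodule.span k (hopfClass k M D '' ((⨆ (i) (_ : big i), N i) ⊔ D).subgroupOf M) := by
  refine le_antisymm (DirectSum.range_le_of_forall_lof_one_tmul_mem ψ _ fun i a => ?_)
    (Submodule.span_le.mpr ?_)
  · obtain ⟨x, rfl⟩ := exists_ofMul_of_mk a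
    rw [hψ]
    refine Submodule.subset_span ⟨_, ?_, rfl⟩
    by_cases hi : big i
    · exact le_sup_left (b := D) (le_iSup₂ (f := fun i _ => N i) i hi x.2)
    · exact le_sup_right (a := ⨆ (i) (_ : big i), N i) (hsmall i hi x.2)
  · rintro _ ⟨x, hx, rfl⟩
    have hle : (⨆ (i) (_ : big i), N i) ⊔ D ≤ hopfClassPreimage k M D (LinearMap.range ψ) :=
      sup_le (iSup₂_le fun i _ z hz => ⟨hNM i hz, _, hψ i ⟨z, hz⟩⟩)
        fun z hz => ⟨hDM hz,
          (hopfClass_eq_zero_of_mem (k := k) (x := ⟨z, hDM hz⟩) hz).symm ▸ Submodule.zero_mem _⟩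
    exact (hle hx).2

end hopfQuot

open scoped DirectSum TensorProduct in
theorem hopf_cokernel_of_psi1_general
    (k : Type*) [Field k] (p : ℕ) [Fact p.Prime]
    (G : Type*) [Group G] [Fintype G] (hGp : IsPGroup p G)
    (r : ℕ) (Gi : Fin r → Subgroup G)
    (F : Type*) [Group F]
    (pr : F →* G)
    -- subgroups `F_i`, `R_i` with `G_i = F_i / R_i`
    (Fi Ri : Fin r → Subgroup F)
    (hFi : ∀ i, (Fi i).map pr = Gi i)
    -- `[F_i,F_i] ⊆ R ∩ [F,F]` (as `G_i` is abelian)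
    (hsub : ∀ i, ⁅Fi i, Fi i⁆ ≤ pr.ker ⊓ ⁅(⊤ : Subgroup F), (⊤ : Subgroup F)⁆)
    -- normality of the subgroups we quotient by
    [∀ i, ((⁅Fi i, Ri i⁆).subgroupOf ⁅Fi i, Fi i⁆).Normal]
    [((⁅(⊤ : Subgroup F), pr.ker⁆).subgroupOf
        (pr.ker ⊓ ⁅(⊤ : Subgroup F), (⊤ : Subgroup F)⁆)).Normal]
    [∀ i, ((⁅(⊤ : Subgroup F), pr.ker⁆).subgroupOf
        (⁅Fi i, Fi i⁆ ⊔ ⁅(⊤ : Subgroup F), pr.ker⁆)).Normal]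
    [(((⨆ (i : Fin r) (_ : p < Nat.card ↥(Gi i)), ⁅Fi i, Fi i⁆) ⊔
        ⁅(⊤ : Subgroup F), pr.ker⁆).subgroupOf
        (pr.ker ⊓ ⁅(⊤ : Subgroup F), (⊤ : Subgroup F)⁆)).Normal]
    -- the maps `f_i : [F_i,F_i]/[F_i,R_i] → (R ∩ [F,F])/[F,R]`
    (fmap : ∀ i : Fin r, hopfQuot F ⁅Fi i, Fi i⁆ ⁅Fi i, Ri i⁆ →*
      hopfQuot F (pr.ker ⊓ ⁅(⊤ : Subgroup F), (⊤ : Subgroup F)⁆) ⁅(⊤ : Subgroup F), pr.ker⁆)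
    (hfmap : ∀ (i : Fin r) (x : ↥(⁅Fi i, Fi i⁆ : Subgroup F)),
      fmap i (QuotientGroup.mk x) = QuotientGroup.mk (⟨(x : F), hsub i x.2⟩ :
        ↥(pr.ker ⊓ ⁅(⊤ : Subgroup F), (⊤ : Subgroup F)⁆)))
    -- `ψ₁ : H₂(G, ⊕_i k[G/G_i]) → H₂(G, k)`, under the Hopf/Shapiro identifications
    (ψ1 : (⨁ i : Fin r,
        k ⊗[ℤ] Additive (Abelianization (hopfQuot F ⁅Fi i, Fi i⁆ ⁅Fi i, Ri i⁆))) →ₗ[k]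
      k ⊗[ℤ] Additive (Abelianization (hopfQuot F
        (pr.ker ⊓ ⁅(⊤ : Subgroup F), (⊤ : Subgroup F)⁆) ⁅(⊤ : Subgroup F), pr.ker⁆)))
    (hψ1 : ∀ (i : Fin r) (x : ↥(⁅Fi i, Fi i⁆ : Subgroup F)),
      ψ1 (DirectSum.lof k (Fin r)
          (fun i => k ⊗[ℤ] Additive (Abelianization (hopfQuot F ⁅Fi i, Fi i⁆ ⁅Fi i, Ri i⁆))) i
          ((1 : k) ⊗ₜ[ℤ] Additive.ofMul (Abelianization.of (QuotientGroup.mk x)))) =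
        (1 : k) ⊗ₜ[ℤ] Additive.ofMul (Abelianization.of (fmap i (QuotientGroup.mk x)))) :
    -- (i) the kernel of `f_i` is `([F_i,F_i] ∩ [F,R])/[F_i,R_i]`
    (∀ i : Fin r, (fmap i).ker =
      (((⁅Fi i, Fi i⁆ ⊓ ⁅(⊤ : Subgroup F), pr.ker⁆).subgroupOf ⁅Fi i, Fi i⁆).map
        (QuotientGroup.mk' ((⁅Fi i, Ri i⁆).subgroupOf ⁅Fi i, Fi i⁆)))) ∧
    -- (ii) the image of `f_i` is `[F_i,F_i][F,R]/[F,R]`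
    (∀ i : Fin r, Nonempty ((fmap i).range ≃*
      hopfQuot F (⁅Fi i, Fi i⁆ ⊔ ⁅(⊤ : Subgroup F), pr.ker⁆) ⁅(⊤ : Subgroup F), pr.ker⁆)) ∧
    -- (iii) `coker ψ₁ = (R ∩ [F,F])/⟨[F_i,F_i][F,R]⟩ ⊗_ℤ k`
    Nonempty (((k ⊗[ℤ] Additive (Abelianization (hopfQuot F
          (pr.ker ⊓ ⁅(⊤ : Subgroup F), (⊤ : Subgroup F)⁆) ⁅(⊤ : Subgroup F), pr.ker⁆))) ⧸
        LinearMap.range ψ1) ≃ₗ[k]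
      k ⊗[ℤ] Additive (Abelianization (hopfQuot F
        (pr.ker ⊓ ⁅(⊤ : Subgroup F), (⊤ : Subgroup F)⁆)
        ((⨆ (i : Fin r) (_ : p < Nat.card ↥(Gi i)), ⁅Fi i, Fi i⁆) ⊔
          ⁅(⊤ : Subgroup F), pr.ker⁆)))) := by
  refine ⟨fun i => hopfQuot.ker_eq_of_map_mk (hNM := hsub i) (hfmap i),
    fun i => hopfQuot.nonempty_range_mulEquiv_of_map_mk (hNM := hsub i) (hfmap i), ?_⟩
  have hsmall (i : Fin r) (hi : ¬ p < Nat.card (Gi i)) :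
      ⁅Fi i, Fi i⁆ ≤ ⁅(⊤ : Subgroup F), pr.ker⁆ := by
    have : IsCyclic ((Fi i).map pr) :=
      hFi i ▸ (hGp.to_subgroup (Gi i)).isCyclic_of_card_le (not_lt.mp hi)
    exact (commutator_le_commutator_ker_inf_of_isCyclic pr (Fi i)).trans
      (Subgroup.commutator_mono le_top inf_le_left)
  have hDM : ⁅(⊤ : Subgroup F), pr.ker⁆ ≤ pr.ker ⊓ ⁅(⊤ : Subgroup F), (⊤ : Subgroup F)⁆ :=
    le_inf (Subgroup.commutator_le_right _ _) (Subgroup.commutator_mono le_rfl le_top)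
  exact hopfQuot.nonempty_quotient_range_linearEquiv le_sup_right
    (Subgroup.commutator_mono le_top inf_le_left) ψ1
    (hopfQuot.range_eq_span_hopfClass hsub hDM _ hsmall ψ1
      fun i x => (hψ1 i x).trans (by rw [hfmap i x]; rfl))

open scoped DirectSum TensorProduct in
theorem hopf_cokernel_of_psi1
    (k : Type*) [Field k] (p : ℕ) [Fact p.Prime] [CharP k p]
    (G : Type*) [Group G] [Fintype G] (hGp : IsPGroup p G)
    (r : ℕ) (Gi : Fin r → Subgroup G)
    -- the decomposition groups are elementary abelian
    (helem : ∀ (i : Fin r) (x : ↥(Gi i)), x ^ p = 1)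
    (hcomm : ∀ (i : Fin r) (x y : ↥(Gi i)), x * y = y * x)
    -- a free presentation `1 → R → F → G → 1`
    (F : Type*) [Group F] [IsFreeGroup F]
    (pr : F →* G) (hpr : Function.Surjective pr)
    -- subgroups `F_i`, `R_i` with `G_i = F_i / R_i`
    (Fi Ri : Fin r → Subgroup F)
    (hRiFi : ∀ i, Ri i ≤ Fi i)
    (hFi : ∀ i, (Fi i).map pr = Gi i)
    (hRi : ∀ i, Ri i = pr.ker ⊓ Fi i)
    -- `[F_i,F_i] ⊆ R ∩ [F,F]` (as `G_i` is abelian)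
    (hsub : ∀ i, ⁅Fi i, Fi i⁆ ≤ pr.ker ⊓ ⁅(⊤ : Subgroup F), (⊤ : Subgroup F)⁆)
    -- normality of the subgroups we quotient by
    [∀ i, ((⁅Fi i, Ri i⁆).subgroupOf ⁅Fi i, Fi i⁆).Normal]
    [((⁅(⊤ : Subgroup F), pr.ker⁆).subgroupOf
        (pr.ker ⊓ ⁅(⊤ : Subgroup F), (⊤ : Subgroup F)⁆)).Normal]
    [∀ i, ((⁅(⊤ : Subgroup F), pr.ker⁆).subgroupOf
        (⁅Fi i, Fi i⁆ ⊔ ⁅(⊤ : Subgroup F), pr.ker⁆)).Normal]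
    [(((⨆ (i : Fin r) (_ : p < Nat.card ↥(Gi i)), ⁅Fi i, Fi i⁆) ⊔
        ⁅(⊤ : Subgroup F), pr.ker⁆).subgroupOf
        (pr.ker ⊓ ⁅(⊤ : Subgroup F), (⊤ : Subgroup F)⁆)).Normal]
    -- the maps `f_i : [F_i,F_i]/[F_i,R_i] → (R ∩ [F,F])/[F,R]`
    (fmap : ∀ i : Fin r, hopfQuot F ⁅Fi i, Fi i⁆ ⁅Fi i, Ri i⁆ →*
      hopfQuot F (pr.ker ⊓ ⁅(⊤ : Subgroup F), (⊤ : Subgroup F)⁆) ⁅(⊤ : Subgroup F), pr.ker⁆)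
    (hfmap : ∀ (i : Fin r) (x : ↥(⁅Fi i, Fi i⁆ : Subgroup F)),
      fmap i (QuotientGroup.mk x) = QuotientGroup.mk (⟨(x : F), hsub i x.2⟩ :
        ↥(pr.ker ⊓ ⁅(⊤ : Subgroup F), (⊤ : Subgroup F)⁆)))
    -- `ψ₁ : H₂(G, ⊕_i k[G/G_i]) → H₂(G, k)`, under the Hopf/Shapiro identifications
    (ψ1 : (⨁ i : Fin r,
        k ⊗[ℤ] Additive (Abelianization (hopfQuot F ⁅Fi i, Fi i⁆ ⁅Fi i, Ri i⁆))) →ₗ[k]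
      k ⊗[ℤ] Additive (Abelianization (hopfQuot F
        (pr.ker ⊓ ⁅(⊤ : Subgroup F), (⊤ : Subgroup F)⁆) ⁅(⊤ : Subgroup F), pr.ker⁆)))
    (hψ1 : ∀ (i : Fin r) (x : ↥(⁅Fi i, Fi i⁆ : Subgroup F)),
      ψ1 (DirectSum.lof k (Fin r)
          (fun i => k ⊗[ℤ] Additive (Abelianization (hopfQuot F ⁅Fi i, Fi i⁆ ⁅Fi i, Ri i⁆))) i
          ((1 : k) ⊗ₜ[ℤ] Additive.ofMul (Abelianization.of (QuotientGroup.mk x)))) =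
        (1 : k) ⊗ₜ[ℤ] Additive.ofMul (Abelianization.of (fmap i (QuotientGroup.mk x)))) :
    -- (i) the kernel of `f_i` is `([F_i,F_i] ∩ [F,R])/[F_i,R_i]`
    (∀ i : Fin r, (fmap i).ker =
      (((⁅Fi i, Fi i⁆ ⊓ ⁅(⊤ : Subgroup F), pr.ker⁆).subgroupOf ⁅Fi i, Fi i⁆).map
        (QuotientGroup.mk' ((⁅Fi i, Ri i⁆).subgroupOf ⁅Fi i, Fi i⁆)))) ∧
    -- (ii) the image of `f_i` is `[F_i,F_i][F,R]/[F,R]`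
    (∀ i : Fin r, Nonempty ((fmap i).range ≃*
      hopfQuot F (⁅Fi i, Fi i⁆ ⊔ ⁅(⊤ : Subgroup F), pr.ker⁆) ⁅(⊤ : Subgroup F), pr.ker⁆)) ∧
    -- (iii) `coker ψ₁ = (R ∩ [F,F])/⟨[F_i,F_i][F,R]⟩ ⊗_ℤ k`
    Nonempty (((k ⊗[ℤ] Additive (Abelianization (hopfQuot F
          (pr.ker ⊓ ⁅(⊤ : Subgroup F), (⊤ : Subgroup F)⁆) ⁅(⊤ : Subgroup F), pr.ker⁆))) ⧸
        LinearMap.range ψ1) ≃ₗ[k]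
      k ⊗[ℤ] Additive (Abelianization (hopfQuot F
        (pr.ker ⊓ ⁅(⊤ : Subgroup F), (⊤ : Subgroup F)⁆)
        ((⨆ (i : Fin r) (_ : p < Nat.card ↥(Gi i)), ⁅Fi i, Fi i⁆) ⊔
          ⁅(⊤ : Subgroup F), pr.ker⁆)))) :=
  hopf_cokernel_of_psi1_general k p G hGp r Gi F pr Fi Ri hFi hsub fmap hfmap ψ1 hψ1
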